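/- arXiv:math/0609618 — 4 statements merged into one kernel-verified Lean document; each statement's English description precedes it below -/
import Mathlib

section
/- Let s ≥ 0 be a real number and let F(X) = Σ_{n≥0} a_n X^n be a formal power series with complex coefficients such that a_0 ≠ 0 and F is Gevrey-s. Then the multiplicative inverse G = F^{−1} in ℂ[[X]] (the unique power series with F·G = 1) is Gevrey-s; that is, there exists a constant D > 0 such that the coefficients b_n of G satisfy |b_n| ≤ D^n·(n!)^s for all n ≥ 1. -/
/-!
Comparing coefficients in `F * G = 1` gives `a₀ bₙ₊₁ = -∑_{i+j=n} aᵢ₊₁ bⱼ`. Any weight `w` with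
`w m * w n ≤ w (m + n)`, such as `n ↦ (n!)^s` for `s ≥ 0`, then propagates by strong induction:
if `|aₙ| ≤ (εD)ⁿ w n` for `n ≥ 1`, where `ε > 0` is small enough that `∑_{k≥1} εᵏ ≤ |a₀|`, then
`|bₙ| ≤ K Dⁿ w n`, since every term of the sum is at most `εⁱ⁺¹ K Dⁿ⁺¹ w (n+1)`.
-/

open Finset PowerSeries
open scoped Nat

theorem Real.factorial_rpow_mul_factorial_rpow_le {s : ℝ} (hs : 0 ≤ s) (m n : ℕ) :
    (m ! : ℝ) ^ s * (n ! : ℝ) ^ s ≤ ((m + n)! : ℝ) ^ s := by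
  rw [← Real.mul_rpow (by positivity) (by positivity)]
  refine Real.rpow_le_rpow (by positivity) ?_ hs
  exact_mod_cast Nat.le_of_dvd (Nat.factorial_pos _)
    (Nat.factorial_mul_factorial_dvd_factorial_add m n)

theorem sum_range_pow_succ_div_add_one_le {A : ℝ} (hA : 0 ≤ A) (n : ℕ) :
    ∑ i ∈ range n, (A / (A + 1)) ^ (i + 1) ≤ A := by
  have hlt : A / (A + 1) < 1 := (div_lt_one (by positivity)).2 (lt_add_one A)
  have hgeom := geom_sum_Ico_le_of_lt_one (m := 1) (n := n + 1) (by positivity) hlt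
  rw [Finset.sum_Ico_eq_sum_range, add_tsub_cancel_right] at hgeom
  calc ∑ i ∈ range n, (A / (A + 1)) ^ (i + 1)
      = ∑ i ∈ range n, (A / (A + 1)) ^ (1 + i) := by simp only [add_comm]
    _ ≤ (A / (A + 1)) ^ 1 / (1 - A / (A + 1)) := hgeom
    _ = A := by field_simp; ring

namespace PowerSeries

variable {𝕜 : Type*} [NormedDivisionRing 𝕜] {F G : 𝕜⟦X⟧}

theorem coeff_zero_ne_zero_of_mul_eq_one (h : F * G = 1) : coeff 0 F ≠ 0 := by
  have := congrArg constantCoeff h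
  rw [map_mul, map_one] at this
  simpa only [coeff_zero_eq_constantCoeff_apply] using left_ne_zero_of_mul_eq_one this

theorem coeff_zero_mul_coeff_succ_add_sum_eq_zero (h : F * G = 1) (n : ℕ) :
    coeff 0 F * coeff (n + 1) G + ∑ p ∈ antidiagonal n, coeff (p.1 + 1) F * coeff p.2 G = 0 := by
  have := congrArg (coeff (n + 1)) h
  rwa [coeff_mul, Nat.sum_antidiagonal_succ, coeff_one, if_neg n.succ_ne_zero] at this

theorem norm_coeff_le_of_mul_eq_one (h : F * G = 1) {w : ℕ → ℝ} (hw : ∀ n, 0 ≤ w n)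
    (hw_mul : ∀ m n, w m * w n ≤ w (m + n)) {ε D K : ℝ} (hε : 0 ≤ ε) (hD : 0 ≤ D) (hK : 0 ≤ K)
    (hε_sum : ∀ n, ∑ i ∈ range n, ε ^ (i + 1) ≤ ‖coeff 0 F‖)
    (hF : ∀ n, ‖coeff (n + 1) F‖ ≤ (ε * D) ^ (n + 1) * w (n + 1))
    (hG : ‖coeff 0 G‖ ≤ K * w 0) (n : ℕ) :
    ‖coeff n G‖ ≤ K * D ^ n * w n := by
  induction n using Nat.strong_induction_on with
  | _ n ih =>
  cases n with
  | zero => simpa using hG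
  | succ n =>
  set X := K * D ^ (n + 1) * w (n + 1)
  have hterm : ∀ p ∈ antidiagonal n, ‖coeff (p.1 + 1) F * coeff p.2 G‖ ≤ ε ^ (p.1 + 1) * X := by
    rintro ⟨i, j⟩ hij
    rw [HasAntidiagonal.mem_antidiagonal] at hij
    subst hij
    calc ‖coeff (i + 1) F * coeff j G‖
        ≤ (ε * D) ^ (i + 1) * w (i + 1) * (K * D ^ j * w j) := by
          rw [norm_mul]
          exact mul_le_mul (hF i) (ih j (by omega)) (norm_nonneg _)
            (mul_nonneg (by positivity) (hw _))
      _ = ε ^ (i + 1) * (K * D ^ (i + j + 1)) * (w (i + 1) * w j) := by ring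
      _ ≤ ε ^ (i + 1) * (K * D ^ (i + j + 1)) * w (i + j + 1) := by
          grw [hw_mul, add_right_comm]
      _ = ε ^ (i + 1) * X := by ring
  have hA : ‖coeff 0 F‖ * ‖coeff (n + 1) G‖ ≤ ‖coeff 0 F‖ * X := calc
    ‖coeff 0 F‖ * ‖coeff (n + 1) G‖
        = ‖∑ p ∈ antidiagonal n, coeff (p.1 + 1) F * coeff p.2 G‖ := by
          rw [← norm_mul, eq_neg_of_add_eq_zero_left
            (coeff_zero_mul_coeff_succ_add_sum_eq_zero h n), norm_neg]
    _ ≤ ∑ p ∈ antidiagonal n, ε ^ (p.1 + 1) * X := (norm_sum_le _ _).trans (sum_le_sum hterm)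
    _ = (∑ i ∈ range (n + 1), ε ^ (i + 1)) * X := by
          rw [← sum_mul, Nat.sum_antidiagonal_eq_sum_range_succ_mk]
    _ ≤ ‖coeff 0 F‖ * X :=
          mul_le_mul_of_nonneg_right (hε_sum _) (mul_nonneg (by positivity) (hw _))
  exact le_of_mul_le_mul_left hA (norm_pos_iff.2 (coeff_zero_ne_zero_of_mul_eq_one h))

end PowerSeries

theorem gevrey_inv_general (s : ℝ) (hs : 0 ≤ s) (F G : PowerSeries ℂ)
    (hF : ∃ C : ℝ, 0 < C ∧ ∀ n : ℕ, 1 ≤ n →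
      ‖PowerSeries.coeff n F‖ ≤ C ^ n * (n.factorial : ℝ) ^ s)
    (hFG : F * G = 1) :
    ∃ D : ℝ, 0 < D ∧ ∀ n : ℕ, 1 ≤ n →
      ‖PowerSeries.coeff n G‖ ≤ D ^ n * (n.factorial : ℝ) ^ s := by
  obtain ⟨C, hC, hFC⟩ := hF
  set A := ‖coeff 0 F‖
  have hA : 0 < A := norm_pos_iff.2 (coeff_zero_ne_zero_of_mul_eq_one hFG)
  set ε := A / (A + 1)
  set D := C / ε
  set K := max 1 ‖coeff 0 G‖
  have hεD : ε * D = C := mul_div_cancel₀ C (by positivity)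
  have hG : ∀ n, ‖coeff n G‖ ≤ K * D ^ n * (n ! : ℝ) ^ s :=
    norm_coeff_le_of_mul_eq_one hFG (fun _ ↦ by positivity)
      (Real.factorial_rpow_mul_factorial_rpow_le hs) (by positivity) (by positivity)
      (by positivity) (sum_range_pow_succ_div_add_one_le hA.le)
      (fun n ↦ hεD ▸ hFC (n + 1) n.succ_pos)
      (by simp only [Nat.factorial_zero, Nat.cast_one, Real.one_rpow, mul_one, le_sup_right, K])
  refine ⟨K * D, by positivity, fun n hn ↦ (hG n).trans ?_⟩
  rw [mul_pow]
  gcongr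
  exact le_self_pow₀ (le_max_left _ _) (by omega)

/-- The multiplicative inverse of a Gevrey-s power series with nonzero constant
term is Gevrey-s. -/
theorem gevrey_inv (s : ℝ) (hs : 0 ≤ s) (F G : PowerSeries ℂ)
    (h0 : PowerSeries.coeff 0 F ≠ 0)
    (hF : ∃ C : ℝ, 0 < C ∧ ∀ n : ℕ, 1 ≤ n →
      ‖PowerSeries.coeff n F‖ ≤ C ^ n * (n.factorial : ℝ) ^ s)
    (hFG : F * G = 1) :
    ∃ D : ℝ, 0 < D ∧ ∀ n : ℕ, 1 ≤ n →
      ‖PowerSeries.coeff n G‖ ≤ D ^ n * (n.factorial : ℝ) ^ s :=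
  gevrey_inv_general s hs F G hF hFG
end

section
/- Let F = Σ_{n≥0} a_n X^n ∈ ℂ[[X]] be a formal power series and let G = Σ_{n≥0} b_n X^n be the formal power series obtained from F by substituting X ↦ e^X − 1, i.e. G = F(exp(X) − 1) where exp(X) − 1 = Σ_{m≥1} X^m/m! has zero constant term so the substitution is well defined. Then F is Gevrey (i.e. there is C > 0 with |a_n| ≤ C^n·n! for all n ≥ 1) if and only if G is Gevrey (i.e. there is C' > 0 with |b_n| ≤ C'^n·n! for all n ≥ 1). -/
/-!
Substituting a series `g` with zero constant term and coefficients of norm at most `1` preserves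
the Gevrey property: the coefficients of `g ^ k` are bounded by `2 ^ (n + k)`, so the `n`-th
coefficient of `f ∘ g` is a sum of at most `n` nonzero terms, each bounded by `(4C) ^ n n!`.
Both `exp X - 1` and its compositional inverse `log (1 + X)` are such series, so the property
transfers in both directions. That `log (1 + X)` inverts `exp X - 1` is checked by
differentiation, using `(1 + X) · log' = 1`.
-/

open Finset PowerSeries
open scoped Nat

namespace PowerSeries

section Subst

variable {R : Type*} [CommRing R]

theorem coeff_pow_eq_zero_of_lt {g : R⟦X⟧} (hg : constantCoeff g = 0) {n k : ℕ} (h : n < k) :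
    coeff n (g ^ k) = 0 :=
  X_pow_dvd_iff.mp (pow_dvd_pow_of_dvd (X_dvd_iff.mpr hg) k) n h

theorem coeff_subst_eq_sum_range {g : R⟦X⟧} (hg : constantCoeff g = 0) (f : R⟦X⟧) (n : ℕ) :
    coeff n (f.subst g) = ∑ k ∈ range (n + 1), coeff k f * coeff n (g ^ k) := by
  rw [coeff_subst' (HasSubst.of_constantCoeff_zero' hg)]
  refine finsum_eq_sum_of_support_subset _ fun k hk => ?_
  by_contra hkn
  simp only [coe_range, Set.mem_Iio, not_lt] at hkn
  exact hk (by simp [coeff_pow_eq_zero_of_lt hg (by omega : n < k)])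

theorem subst_eq_X_of_subst_eq_X {e l : R⟦X⟧} (he : constantCoeff e = 0)
    (he1 : IsUnit (coeff 1 e)) (hle : l.subst e = X) : e.subst l = X := by
  have hQ : HasSubst (e.substInvOfIsUnit he1) := HasSubst.substInvOfIsUnit e he1
  have hl : l = e.substInvOfIsUnit he1 := calc
    l = l.subst (e.subst (e.substInvOfIsUnit he1)) := by
        rw [subst_substInvOfIsUnit_right e he he1, X_subst]
    _ = e.substInvOfIsUnit he1 := by
        rw [← subst_comp_subst_apply (HasSubst.of_constantCoeff_zero' he) hQ, hle, subst_X hQ]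
  rw [hl, subst_substInvOfIsUnit_right e he he1]

end Subst

section Gevrey

variable {R : Type*} [NormedCommRing R] [NormOneClass R]

def IsGevrey (f : R⟦X⟧) : Prop :=
  ∃ C : ℝ, 0 < C ∧ ∀ n : ℕ, 1 ≤ n → ‖coeff n f‖ ≤ C ^ n * n !

theorem norm_coeff_pow_le {g : R⟦X⟧} (hg : ∀ m, ‖coeff m g‖ ≤ 1) (k n : ℕ) :
    ‖coeff n (g ^ k)‖ ≤ 2 ^ (n + k) := by
  induction k generalizing n with
  | zero =>
    rw [pow_zero, coeff_one]
    split_ifs <;> simp [one_le_pow₀]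
  | succ k ih =>
    calc ‖coeff n (g ^ (k + 1))‖
        ≤ ∑ p ∈ antidiagonal n, ‖coeff p.1 (g ^ k)‖ * ‖coeff p.2 g‖ := by
          rw [pow_succ, coeff_mul]
          exact (norm_sum_le _ _).trans (sum_le_sum fun p _ => norm_mul_le _ _)
      _ ≤ ∑ p ∈ antidiagonal n, (2 : ℝ) ^ (p.1 + k) :=
          sum_le_sum fun p _ =>
            (mul_le_mul (ih p.1) (hg p.2) (norm_nonneg _) (by positivity)).trans_eq (mul_one _)
      _ = 2 ^ k * ∑ i ∈ range (n + 1), (2 : ℝ) ^ i := by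
          rw [Nat.sum_antidiagonal_eq_sum_range_succ_mk, mul_sum]
          exact sum_congr rfl fun i _ => by ring
      _ ≤ 2 ^ k * 2 ^ (n + 1) := by
          gcongr
          exact_mod_cast (Nat.geomSum_lt le_rfl fun i hi => mem_range.mp hi).le
      _ = 2 ^ (n + (k + 1)) := by ring

theorem norm_coeff_subst_le {f g : R⟦X⟧} (hg0 : constantCoeff g = 0)
    (hg : ∀ m, ‖coeff m g‖ ≤ 1) {D : ℝ} (hD : 1 ≤ D)
    (hf : ∀ k, 1 ≤ k → ‖coeff k f‖ ≤ D ^ k * k !) {n : ℕ} (hn : 1 ≤ n) :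
    ‖coeff n (f.subst g)‖ ≤ (8 * D) ^ n * n ! := by
  have term : ∀ k ∈ range (n + 1), ‖coeff k f * coeff n (g ^ k)‖ ≤ (4 * D) ^ n * n ! := by
    intro k hk
    have hkn : k ≤ n := Nat.lt_succ_iff.mp (mem_range.mp hk)
    rcases Nat.eq_zero_or_pos k with rfl | hk1
    · simp only [pow_zero, coeff_one, if_neg (Nat.one_le_iff_ne_zero.mp hn), mul_zero, norm_zero]
      positivity
    calc ‖coeff k f * coeff n (g ^ k)‖ ≤ (D ^ n * n !) * 2 ^ (n + n) := by
          refine (norm_mul_le _ _).trans (mul_le_mul ?_ ?_ (norm_nonneg _) (by positivity))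
          · refine (hf k hk1).trans (mul_le_mul (pow_le_pow_right₀ hD hkn) ?_
              (by positivity) (by positivity))
            exact_mod_cast Nat.factorial_le hkn
          · exact (norm_coeff_pow_le hg k n).trans (pow_le_pow_right₀ one_le_two (by omega))
      _ = (4 * D) ^ n * n ! := by
          rw [mul_pow, show (4 : ℝ) = 2 ^ 2 by norm_num, ← pow_mul]
          ring
  have hcard : ((n + 1 : ℕ) : ℝ) ≤ 2 ^ n := by exact_mod_cast Nat.lt_two_pow_self
  calc ‖coeff n (f.subst g)‖ ≤ ∑ k ∈ range (n + 1), ‖coeff k f * coeff n (g ^ k)‖ := by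
        rw [coeff_subst_eq_sum_range hg0]
        exact norm_sum_le _ _
    _ ≤ (n + 1 : ℕ) * ((4 * D) ^ n * n !) := by simpa using sum_le_sum term
    _ ≤ 2 ^ n * ((4 * D) ^ n * n !) := by gcongr
    _ = (8 * D) ^ n * n ! := by rw [show (8 : ℝ) * D = 2 * (4 * D) by ring, mul_pow (2 : ℝ)]; ring

theorem IsGevrey.subst {f g : R⟦X⟧} (hf : f.IsGevrey) (hg0 : constantCoeff g = 0)
    (hg : ∀ m, ‖coeff m g‖ ≤ 1) : IsGevrey (f.subst g : R⟦X⟧) := by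
  obtain ⟨C, hC0, hC⟩ := hf
  refine ⟨8 * max C 1, by positivity, fun n hn => norm_coeff_subst_le hg0 hg (le_max_right C 1)
    (fun k hk => (hC k hk).trans ?_) hn⟩
  gcongr
  exact le_max_left C 1

end Gevrey

section ExpLog

variable {A : Type*} [CommRing A] [Algebra ℚ A]

theorem constantCoeff_exp_sub_one : constantCoeff (exp A - 1) = 0 := by
  rw [map_sub, constantCoeff_exp, map_one, sub_self]

theorem one_add_X_mul_derivative_log : (1 + X) * d⁄dX A (log A) = 1 := by
  ext n
  rcases n with _ | n
  · simp [deriv_log]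
  · simp [deriv_log, add_mul, coeff_succ_X_mul, pow_succ]

variable [IsAddTorsionFree A]

theorem log_subst_exp_sub_one : (log A).subst (exp A - 1) = X := by
  have he : HasSubst (exp A - 1) := HasSubst.exp_sub_one
  refine derivative.ext ?_ ?_
  · have h := congrArg (substAlgHom he) (one_add_X_mul_derivative_log (A := A))
    rw [map_mul, map_add, map_one, coe_substAlgHom, subst_X he, add_sub_cancel] at h
    rw [derivative_subst he, map_sub, derivative_exp, derivative_one, sub_zero, mul_comm, h,
      derivative_X]
  · rw [constantCoeff_X]
    exact constantCoeff_subst_eq_zero constantCoeff_exp_sub_one _ constantCoeff_log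

theorem exp_sub_one_subst_log : (exp A - 1).subst (log A) = X :=
  subst_eq_X_of_subst_eq_X constantCoeff_exp_sub_one (by simp [coeff_exp]) log_subst_exp_sub_one

end ExpLog

section Norms

variable {𝕜 : Type*} [RCLike 𝕜]

theorem norm_coeff_exp_sub_one_le (m : ℕ) : ‖coeff m (exp 𝕜 - 1)‖ ≤ 1 := by
  rcases Nat.eq_zero_or_pos m with rfl | hm
  · simp [constantCoeff_exp]
  · rw [map_sub, coeff_one, if_neg hm.ne', sub_zero, coeff_exp, map_div₀, map_one, map_natCast,
      norm_div, norm_one, RCLike.norm_natCast]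
    exact div_le_one_of_le₀ (mod_cast m.factorial_pos) (Nat.cast_nonneg _)

theorem norm_coeff_log_le (m : ℕ) : ‖coeff m (log 𝕜)‖ ≤ 1 := by
  rw [coeff_log]
  split_ifs with hm
  · simp
  · rw [map_div₀, map_pow, map_neg, map_one, map_natCast, norm_div, norm_pow, norm_neg, norm_one,
      one_pow, RCLike.norm_natCast]
    exact div_le_one_of_le₀ (mod_cast Nat.one_le_iff_ne_zero.mpr hm) (Nat.cast_nonneg _)

end Norms

end PowerSeries

/-- A power series `F ∈ ℂ[[X]]` is Gevrey if and only if the power series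
`G = F(exp X − 1)`, obtained by substituting `X ↦ e^X − 1` into `F`, is Gevrey.
Since `exp X − 1` has zero constant term, the coefficients of the composition
are given by the finite sums `coeff n G = ∑_{k=0}^n (coeff k F) · coeff n ((exp X − 1)^k)`. -/
theorem gevrey_subst_exp_sub_one_iff (F G : PowerSeries ℂ)
    (hG : ∀ n : ℕ, PowerSeries.coeff n G =
      ∑ k ∈ Finset.range (n + 1), PowerSeries.coeff k F *
        PowerSeries.coeff n ((PowerSeries.exp ℂ - 1) ^ k)) :
    (∃ C : ℝ, 0 < C ∧ ∀ n : ℕ, 1 ≤ n →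
      ‖PowerSeries.coeff n F‖ ≤ C ^ n * (n.factorial : ℝ)) ↔
    (∃ C : ℝ, 0 < C ∧ ∀ n : ℕ, 1 ≤ n →
      ‖PowerSeries.coeff n G‖ ≤ C ^ n * (n.factorial : ℝ)) := by
  have hexp : constantCoeff (exp ℂ - 1) = 0 := constantCoeff_exp_sub_one
  have hGF : G = F.subst (exp ℂ - 1) := by
    ext n
    rw [hG, coeff_subst_eq_sum_range hexp]
  have hFG : F = G.subst (log ℂ) := by
    rw [hGF, subst_comp_subst_apply HasSubst.exp_sub_one HasSubst.log, exp_sub_one_subst_log,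
      X_subst]
  change IsGevrey F ↔ IsGevrey G
  constructor
  · intro hF
    rw [hGF]
    exact hF.subst hexp norm_coeff_exp_sub_one_le
  · intro hGevrey
    rw [hFG]
    exact hGevrey.subst constantCoeff_log norm_coeff_log_le
end

section
/- Let (f_n(q))_{n≥0} be a nicely bounded sequence of Laurent polynomials with integer coefficients, and for n ≥ 0 define c_n = Σ_{k=0}^{n} ⟨(f_k(q)·(q)_k)(e^{1/x})⟩_n, where (q)_k = ∏_{j=1}^k (1 − q^j). Then the sequence (c_n) is Gevrey: there exists a constant C > 0 such that |c_n| ≤ C^n·n! for all n ≥ 1. (Equivalently: for every element f(q) = Σ_{n≥0} f_n(q)·(q)_n of the Habiro ring with nicely bounded coefficient sequence, the Taylor series f(e^{1/x}) ∈ ℚ[[1/x]] is Gevrey.) -/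
/-- A sequence of integer Laurent polynomials is *nicely bounded* if the support of
`f n` lies in `[−C'·n², C'·n²]` and the ℓ¹-norm of `f n` is at most `C^n`, for all `n ≥ 1`. -/
def NicelyBounded (f : ℕ → LaurentPolynomial ℤ) : Prop :=
  ∃ C C' : ℝ, 0 < C ∧ 0 < C' ∧ ∀ n : ℕ, 1 ≤ n →
    (∀ j ∈ (f n).coeff.support, |(j : ℝ)| ≤ C' * (n : ℝ) ^ 2) ∧
    (∑ j ∈ (f n).coeff.support, |((f n).coeff j : ℝ)|) ≤ C ^ n

/-- For a Laurent polynomial `p(q) = ∑_j a_j q^j`, `laurentExpCoeff p n` is the coefficient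
`⟨p(e^{1/x})⟩_n = (1/n!)·∑_j a_j·j^n` of `x^{−n}` in the Taylor expansion of `p(e^{1/x})`. -/
noncomputable def laurentExpCoeff (p : LaurentPolynomial ℤ) (n : ℕ) : ℝ :=
  (1 / (n.factorial : ℝ)) * ∑ j ∈ p.coeff.support, (p.coeff j : ℝ) * (j : ℝ) ^ n

/-- The Laurent polynomial `(q)_k = ∏_{j=1}^k (1 − q^j)`. -/
noncomputable def qPochhammer' (k : ℕ) : LaurentPolynomial ℤ :=
  ∏ j ∈ Finset.range k, (1 - LaurentPolynomial.T (j + 1))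



/-!
For `k ≤ n` the summand `f_k(q)·(q)_k` has ℓ¹-norm at most `(2C)^n` and exponents in
`[-A n², A n²]` for some `A`, since `(q)_k` has ℓ¹-norm at most `2^k` and exponents in
`[0, k²]`. So its `n`-th coefficient at `q = e^{1/x}` is at most `(2C)^n (A n²)^n / n!`, and
`n^n ≤ eⁿ n!` bounds `(n²)^n / n!` by `e^{2n} n!`. Summing the `n + 1 ≤ 2^n` summands gives
the Gevrey bound.
-/

open Finset

namespace LaurentPolynomial

noncomputable def l1Norm (p : ℤ[T;T⁻¹]) : ℝ :=
  ∑ j ∈ p.coeff.support, |(p.coeff j : ℝ)|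

lemma l1Norm_nonneg (p : ℤ[T;T⁻¹]) : 0 ≤ l1Norm p :=
  sum_nonneg fun _ _ ↦ abs_nonneg _

lemma l1Norm_eq_sum_of_support_subset {p : ℤ[T;T⁻¹]} {s : Finset ℤ}
    (hs : p.coeff.support ⊆ s) : l1Norm p = ∑ j ∈ s, |(p.coeff j : ℝ)| :=
  sum_subset hs fun j _ hj ↦ by simp [Finsupp.notMem_support_iff.mp hj]

lemma l1Norm_add_le (p q : ℤ[T;T⁻¹]) : l1Norm (p + q) ≤ l1Norm p + l1Norm q := by
  classical
  rw [l1Norm_eq_sum_of_support_subset (AddMonoidAlgebra.coeff_add p q ▸ Finsupp.support_add),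
    l1Norm_eq_sum_of_support_subset (subset_union_left (s₂ := q.coeff.support)),
    l1Norm_eq_sum_of_support_subset (subset_union_right (s₁ := p.coeff.support)),
    ← sum_add_distrib]
  refine sum_le_sum fun j _ ↦ ?_
  simpa [AddMonoidAlgebra.coeff_add] using abs_add_le (p.coeff j : ℝ) (q.coeff j)

lemma l1Norm_neg (p : ℤ[T;T⁻¹]) : l1Norm (-p) = l1Norm p := by
  simp [l1Norm, AddMonoidAlgebra.coeff_neg]

lemma l1Norm_sub_le (p q : ℤ[T;T⁻¹]) : l1Norm (p - q) ≤ l1Norm p + l1Norm q := by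
  simpa [sub_eq_add_neg, l1Norm_neg] using l1Norm_add_le p (-q)

lemma l1Norm_single (m r : ℤ) : l1Norm (AddMonoidAlgebra.single m r) = |(r : ℝ)| := by
  by_cases hr : r = 0
  · rw [hr, AddMonoidAlgebra.single_zero]
    simp [l1Norm]
  · rw [l1Norm, AddMonoidAlgebra.coeff_single, Finsupp.support_single _ hr, sum_singleton,
      Finsupp.single_eq_same]

lemma l1Norm_T (m : ℤ) : l1Norm (T m) = 1 := by
  rw [T, l1Norm_single, Int.cast_one, abs_one]

lemma l1Norm_sum_le {ι : Type*} (s : Finset ι) (p : ι → ℤ[T;T⁻¹]) :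
    l1Norm (∑ i ∈ s, p i) ≤ ∑ i ∈ s, l1Norm (p i) :=
  le_sum_of_subadditive l1Norm (by simp [l1Norm]) l1Norm_add_le s p

lemma l1Norm_mul_le (p q : ℤ[T;T⁻¹]) : l1Norm (p * q) ≤ l1Norm p * l1Norm q := by
  rw [AddMonoidAlgebra.mul_def, Finsupp.sum]
  refine (l1Norm_sum_le _ _).trans ?_
  rw [l1Norm, l1Norm, sum_mul_sum]
  refine sum_le_sum fun a _ ↦ (l1Norm_sum_le _ _).trans (sum_le_sum fun b _ ↦ ?_)
  rw [l1Norm_single, Int.cast_mul, abs_mul]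

variable {R : Type*}

def SupportBoundedBy [Semiring R] (p : R[T;T⁻¹]) (r : ℝ) : Prop :=
  ∀ j ∈ p.coeff.support, |(j : ℝ)| ≤ r

lemma SupportBoundedBy.mono [Semiring R] {p : R[T;T⁻¹]} {r s : ℝ} (hp : SupportBoundedBy p r)
    (hrs : r ≤ s) : SupportBoundedBy p s :=
  fun j hj ↦ (hp j hj).trans hrs

lemma SupportBoundedBy.mul [Semiring R] {p q : R[T;T⁻¹]} {r s : ℝ} (hp : SupportBoundedBy p r)
    (hq : SupportBoundedBy q s) : SupportBoundedBy (p * q) (r + s) := by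
  classical
  intro j hj
  obtain ⟨a, ha, b, hb, rfl⟩ := mem_add.mp (AddMonoidAlgebra.support_coeff_mul_subset p q hj)
  push_cast
  exact (abs_add_le _ _).trans (add_le_add (hp a ha) (hq b hb))

lemma SupportBoundedBy.sub [Ring R] {p q : R[T;T⁻¹]} {r : ℝ} (hp : SupportBoundedBy p r)
    (hq : SupportBoundedBy q r) : SupportBoundedBy (p - q) r := by
  classical
  intro j hj
  rw [AddMonoidAlgebra.coeff_sub] at hj
  rcases mem_union.mp (Finsupp.support_sub hj) with hj | hj
  exacts [hp j hj, hq j hj]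

lemma supportBoundedBy_T [Semiring R] (m : ℤ) :
    SupportBoundedBy (T m : R[T;T⁻¹]) |(m : ℝ)| := by
  intro j hj
  rw [T, AddMonoidAlgebra.coeff_single] at hj
  rw [mem_singleton.mp (Finsupp.support_single_subset hj)]

end LaurentPolynomial

open LaurentPolynomial

lemma qPochhammer'_succ (k : ℕ) : qPochhammer' (k + 1) = qPochhammer' k * (1 - T (k + 1)) :=
  prod_range_succ _ k

lemma supportBoundedBy_qPochhammer' (k : ℕ) :
    SupportBoundedBy (qPochhammer' k) ((k : ℝ) ^ 2) := by
  induction k with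
  | zero =>
    simpa [qPochhammer', T_zero] using supportBoundedBy_T (R := ℤ) 0
  | succ k ih =>
    have hone : SupportBoundedBy (T 0 : ℤ[T;T⁻¹]) (k + 1) :=
      (supportBoundedBy_T 0).mono (by rw [Int.cast_zero, abs_zero]; positivity)
    have hT : SupportBoundedBy (T (k + 1) : ℤ[T;T⁻¹]) (k + 1) := by
      simpa [abs_of_nonneg (by positivity : (0 : ℝ) ≤ k + 1)] using
        supportBoundedBy_T (R := ℤ) (k + 1)
    rw [qPochhammer'_succ, ← T_zero]
    exact (ih.mul (hone.sub hT)).mono (by push_cast; nlinarith)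

lemma l1Norm_qPochhammer'_le (k : ℕ) : l1Norm (qPochhammer' k) ≤ 2 ^ k := by
  induction k with
  | zero => simp [qPochhammer', ← T_zero, l1Norm_T]
  | succ k ih =>
    have hfactor : l1Norm (1 - T (k + 1)) ≤ 2 := by
      have := l1Norm_sub_le (T 0) (T (k + 1))
      rwa [l1Norm_T, l1Norm_T, T_zero, one_add_one_eq_two] at this
    rw [qPochhammer'_succ, pow_succ]
    exact (l1Norm_mul_le _ _).trans
      (mul_le_mul ih hfactor (l1Norm_nonneg _) (by positivity))

lemma abs_laurentExpCoeff_le {p : ℤ[T;T⁻¹]} {r : ℝ} (hp : SupportBoundedBy p r) (n : ℕ) :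
    |laurentExpCoeff p n| ≤ l1Norm p * r ^ n / n.factorial := by
  rw [laurentExpCoeff, one_div_mul_eq_div, abs_div, Nat.abs_cast, l1Norm, sum_mul]
  gcongr
  refine (abs_sum_le_sum_abs _ _).trans (sum_le_sum fun j hj ↦ ?_)
  rw [abs_mul, abs_pow]
  gcongr
  exact hp j hj

lemma natCast_pow_self_le_exp_one_pow_mul_factorial (n : ℕ) :
    (n : ℝ) ^ n ≤ Real.exp 1 ^ n * n.factorial := by
  rw [← div_le_iff₀ (by positivity), Real.exp_one_pow]
  exact Real.pow_div_factorial_le_exp _ (Nat.cast_nonneg n) n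

lemma mul_sq_pow_div_factorial_le {a : ℝ} (ha : 0 ≤ a) (n : ℕ) :
    (a * (n : ℝ) ^ 2) ^ n / n.factorial ≤ (a * Real.exp 1 ^ 2) ^ n * n.factorial := by
  have hfact : (0 : ℝ) < n.factorial := by positivity
  have hpow := natCast_pow_self_le_exp_one_pow_mul_factorial n
  rw [div_le_iff₀ hfact]
  calc (a * (n : ℝ) ^ 2) ^ n = a ^ n * ((n : ℝ) ^ n) ^ 2 := by ring
    _ ≤ a ^ n * (Real.exp 1 ^ n * n.factorial) ^ 2 := by gcongr
    _ = (a * Real.exp 1 ^ 2) ^ n * n.factorial * n.factorial := by ring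

namespace NicelyBounded

variable {f : ℕ → ℤ[T;T⁻¹]}

lemma exists_bound_of_le (hf : NicelyBounded f) :
    ∃ A B : ℝ, 0 < A ∧ 0 < B ∧ ∀ n k : ℕ, 1 ≤ n → k ≤ n →
      SupportBoundedBy (f k) (A * (n : ℝ) ^ 2) ∧ l1Norm (f k) ≤ B ^ n := by
  obtain ⟨C, C', hC, hC', hbound⟩ := hf
  -- `NicelyBounded` constrains only `n ≥ 1`; `f 0` is absorbed into the constants.
  obtain ⟨r₀, hr₀⟩ := ((f 0).coeff.support.image fun j : ℤ ↦ |(j : ℝ)|).exists_le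
  have hr₀ : SupportBoundedBy (f 0) |r₀| :=
    fun j hj ↦ (hr₀ _ (mem_image_of_mem _ hj)).trans (le_abs_self r₀)
  set B := max (max C (l1Norm (f 0))) 1
  have hB : 1 ≤ B := le_max_right _ _
  have hCB : C ≤ B := (le_max_left _ _).trans (le_max_left _ _)
  have hf₀B : l1Norm (f 0) ≤ B := (le_max_right _ _).trans (le_max_left _ _)
  refine ⟨C' + |r₀|, B, by positivity, by linarith, fun n k hn hkn ↦ ?_⟩
  have hn2 : (1 : ℝ) ≤ (n : ℝ) ^ 2 := one_le_pow₀ (by exact_mod_cast hn)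
  rcases Nat.eq_zero_or_pos k with rfl | hk
  · exact ⟨hr₀.mono (by nlinarith [abs_nonneg r₀]),
      hf₀B.trans (le_self_pow₀ hB (by omega))⟩
  · have hk2 : (k : ℝ) ^ 2 ≤ (n : ℝ) ^ 2 := by gcongr
    refine ⟨SupportBoundedBy.mono (hbound k hk).1 (by nlinarith [abs_nonneg r₀]), ?_⟩
    calc l1Norm (f k) ≤ C ^ k := (hbound k hk).2
      _ ≤ B ^ k := by gcongr
      _ ≤ B ^ n := pow_le_pow_right₀ hB hkn

lemma exists_bound_mul_qPochhammer'_of_le (hf : NicelyBounded f) :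
    ∃ A B : ℝ, 0 < A ∧ 0 < B ∧ ∀ n k : ℕ, 1 ≤ n → k ≤ n →
      SupportBoundedBy (f k * qPochhammer' k) (A * (n : ℝ) ^ 2) ∧
        l1Norm (f k * qPochhammer' k) ≤ B ^ n := by
  obtain ⟨A, B, hA, hB, hbound⟩ := hf.exists_bound_of_le
  refine ⟨A + 1, 2 * B, by positivity, by positivity, fun n k hn hkn ↦ ⟨?_, ?_⟩⟩
  · have hk2 : (k : ℝ) ^ 2 ≤ (n : ℝ) ^ 2 := by gcongr
    exact ((hbound n k hn hkn).1.mul (supportBoundedBy_qPochhammer' k)).mono (by linarith)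
  · calc l1Norm (f k * qPochhammer' k) ≤ B ^ n * 2 ^ n :=
          (l1Norm_mul_le _ _).trans (mul_le_mul (hbound n k hn hkn).2
            ((l1Norm_qPochhammer'_le k).trans (pow_le_pow_right₀ one_le_two hkn))
            (l1Norm_nonneg _) (by positivity))
      _ = (2 * B) ^ n := by ring

lemma exists_abs_laurentExpCoeff_le (hf : NicelyBounded f) :
    ∃ K : ℝ, 0 < K ∧ ∀ n k : ℕ, 1 ≤ n → k ≤ n →
      |laurentExpCoeff (f k * qPochhammer' k) n| ≤ K ^ n * n.factorial := by
  obtain ⟨A, B, hA, hB, hbound⟩ := hf.exists_bound_mul_qPochhammer'_of_le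
  refine ⟨B * (A * Real.exp 1 ^ 2), by positivity, fun n k hn hkn ↦ ?_⟩
  obtain ⟨hsupp, hl1⟩ := hbound n k hn hkn
  calc |laurentExpCoeff (f k * qPochhammer' k) n|
      ≤ l1Norm (f k * qPochhammer' k) * (A * (n : ℝ) ^ 2) ^ n / n.factorial :=
        abs_laurentExpCoeff_le hsupp n
    _ ≤ B ^ n * ((A * (n : ℝ) ^ 2) ^ n / n.factorial) := by
        rw [mul_div_assoc]; gcongr
    _ ≤ B ^ n * ((A * Real.exp 1 ^ 2) ^ n * n.factorial) := by
        gcongr; exact mul_sq_pow_div_factorial_le hA.le n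
    _ = (B * (A * Real.exp 1 ^ 2)) ^ n * n.factorial := by ring

end NicelyBounded

/-- If `(f_n(q))` is a nicely bounded sequence of integer Laurent polynomials, then the
Taylor series at `q = e^{1/x}` of the Habiro-ring element `∑_n f_n(q)·(q)_n`, whose `n`-th
coefficient is the finite sum `c_n = ∑_{k=0}^n ⟨(f_k(q)·(q)_k)(e^{1/x})⟩_n`, is Gevrey. -/
theorem habiro_nicelyBounded_gevrey (f : ℕ → LaurentPolynomial ℤ)
    (hf : NicelyBounded f)
    (c : ℕ → ℝ)
    (hc : ∀ n : ℕ, c n = ∑ k ∈ Finset.range (n + 1), laurentExpCoeff (f k * qPochhammer' k) n) :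
    ∃ C : ℝ, 0 < C ∧ ∀ n : ℕ, 1 ≤ n → |c n| ≤ C ^ n * (n.factorial : ℝ) := by
  obtain ⟨K, hK, hterm⟩ := hf.exists_abs_laurentExpCoeff_le
  refine ⟨2 * K, by positivity, fun n hn ↦ ?_⟩
  have hcard : (n : ℝ) + 1 ≤ 2 ^ n := by exact_mod_cast Nat.lt_two_pow_self
  calc |c n| ≤ ∑ k ∈ range (n + 1), |laurentExpCoeff (f k * qPochhammer' k) n| :=
        hc n ▸ abs_sum_le_sum_abs _ _
    _ ≤ ∑ k ∈ range (n + 1), K ^ n * n.factorial :=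
        sum_le_sum fun k hk ↦ hterm n k hn (mem_range_succ_iff.mp hk)
    _ = ((n : ℝ) + 1) * (K ^ n * n.factorial) := by simp
    _ ≤ 2 ^ n * (K ^ n * n.factorial) := by gcongr
    _ = (2 * K) ^ n * n.factorial := by ring
end

section
/- For every real number x with x > 1/(2π), the series Σ_{n=1}^∞ ζ(2n)/(2n·(2π)^{2n})·x^{−2n} converges and its sum equals (1/2)·log( (1/(2x)) / sin(1/(2x)) ). (This evaluates exp(Σ_n |b_{2n}| x^{−2n}) = sqrt( (1/(2x)) / sin(1/(2x)) ), since the modified Bernoulli numbers satisfy |b_{2n}| = ζ(2n)/(2n·(2π)^{2n}).) -/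
open Real Filter Finset

private lemma aux_coeff (S A B N : ℝ) (hA : A ≠ 0) (hB : B ≠ 0) (hN : N ≠ 0) :
    1 / 2 * (A * B)⁻¹ / N * S = S / (2 * N * A) * B⁻¹ := by
  field_simp

/-- For real `x > 1/(2π)`, the series `∑_{n≥1} ζ(2n)/(2n·(2π)^{2n})·x^{−2n}` converges
to `(1/2)·log((1/(2x))/sin(1/(2x)))`; this evaluates
`exp(∑_n |b_{2n}| x^{−2n}) = sqrt((1/(2x))/sin(1/(2x)))` for the modified Bernoulli
numbers `b_{2n}`. -/
theorem sum_abs_modifiedBernoulli (x : ℝ) (hx : 1 / (2 * Real.pi) < x) :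
    HasSum
      (fun n : ℕ =>
        (∑' k : ℕ, 1 / ((k : ℝ) + 1) ^ (2 * (n + 1))) /
          ((2 * ((n : ℝ) + 1)) * (2 * Real.pi) ^ (2 * (n + 1))) * (x ^ (2 * (n + 1)))⁻¹)
      ((1 / 2) * Real.log ((1 / (2 * x)) / Real.sin (1 / (2 * x)))) := by
  have hπ := Real.pi_pos
  have hx0 : 0 < x := lt_trans (by positivity) hx
  set z : ℝ := 1 / (2 * π * x) with hzdef
  have hz0 : 0 < z := by positivity
  have hz1 : z < 1 := by
    rw [hzdef, div_lt_one (by positivity)]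
    have := (div_lt_iff₀ (by positivity : (0:ℝ) < 2 * π)).1 hx
    nlinarith
  have hpz : π * z = 1 / (2 * x) := by
    rw [hzdef]; field_simp
  have hzprod : z * (2 * π * x) = 1 := by
    rw [hzdef]; field_simp
  clear_value z
  -- base facts per k
  have hfrac : ∀ k : ℕ, 0 < z / ((k : ℝ) + 1) ∧ z / ((k : ℝ) + 1) < 1 := by
    intro k
    have hk1 : (1:ℝ) ≤ (k : ℝ) + 1 := by
      have := Nat.cast_nonneg (α := ℝ) k; linarith
    constructor
    · positivity
    · calc z / ((k : ℝ) + 1) ≤ z / 1 := by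
            apply div_le_div_of_nonneg_left hz0.le one_pos hk1
         _ = z := div_one z
         _ < 1 := hz1
  have hsq : ∀ k : ℕ, (z / ((k : ℝ) + 1)) ^ 2 < 1 := fun k =>
    pow_lt_one₀ (hfrac k).1.le (hfrac k).2 two_ne_zero
  have hsq0 : ∀ k : ℕ, 0 < (z / ((k : ℝ) + 1)) ^ 2 := fun k => pow_pos (hfrac k).1 2
  set F : ℕ × ℕ → ℝ := fun p =>
    (1 / 2) * (((z / ((p.2 : ℝ) + 1)) ^ 2) ^ (p.1 + 1) / ((p.1 : ℝ) + 1)) with hF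
  have hFnonneg : ∀ p : ℕ × ℕ, 0 ≤ F p := by
    intro p; rw [hF]; positivity
  -- per-k sum over n
  have hn1 : ∀ k : ℕ, HasSum (fun n => F (n, k))
      ((1 / 2) * (-Real.log (1 - (z / ((k : ℝ) + 1)) ^ 2))) := by
    intro k
    have := hasSum_pow_div_log_of_abs_lt_one
      (x := (z / ((k : ℝ) + 1)) ^ 2)
      (by rw [abs_of_nonneg (hsq0 k).le]; exact hsq k)
    exact this.mul_left (1 / 2)
  -- sum over k of the logs, via Euler product
  have hone : ∀ k : ℕ, 0 < 1 - (z / ((k : ℝ) + 1)) ^ 2 := fun k => by linarith [hsq k]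
  have hsin : 0 < Real.sin (π * z) :=
    Real.sin_pos_of_pos_of_lt_pi (by positivity) (by nlinarith)
  have hlim : 0 < Real.sin (π * z) / (π * z) := div_pos hsin (by positivity)
  have hP : Tendsto (fun N : ℕ => ∏ j ∈ Finset.range N, (1 - z ^ 2 / ((j : ℝ) + 1) ^ 2))
      atTop (nhds (Real.sin (π * z) / (π * z))) := by
    have h := (Real.tendsto_euler_sin_prod z).div_const (π * z)
    refine h.congr (fun N => ?_)
    rw [mul_comm, mul_div_assoc, div_self (by positivity : π * z ≠ 0), mul_one]
  have hlogP : Tendsto (fun N : ℕ => ∑ j ∈ Finset.range N, -Real.log (1 - z ^ 2 / ((j : ℝ) + 1) ^ 2))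
      atTop (nhds (-Real.log (Real.sin (π * z) / (π * z)))) := by
    have hcont := (Real.continuousAt_log hlim.ne').tendsto.comp hP
    have heq : ∀ N : ℕ, Real.log (∏ j ∈ Finset.range N, (1 - z ^ 2 / ((j : ℝ) + 1) ^ 2)) =
        ∑ j ∈ Finset.range N, Real.log (1 - z ^ 2 / ((j : ℝ) + 1) ^ 2) := by
      intro N
      refine Real.log_prod (fun j _ => ?_)
      have := hone j
      rw [div_pow] at this
      linarith
    have := hcont.neg
    refine this.congr (fun N => ?_)
    simp only [Function.comp_apply, heq N, ← Finset.sum_neg_distrib]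
  have hk : HasSum (fun k : ℕ => -Real.log (1 - (z / ((k : ℝ) + 1)) ^ 2))
      (-Real.log (Real.sin (π * z) / (π * z))) := by
    have hnn : ∀ k : ℕ, 0 ≤ -Real.log (1 - (z / ((k : ℝ) + 1)) ^ 2) := by
      intro k
      have h1 := hone k
      have h2 : 1 - (z / ((k : ℝ) + 1)) ^ 2 ≤ 1 := by nlinarith [hsq0 k]
      have := Real.log_nonpos h1.le h2
      linarith
    rw [hasSum_iff_tendsto_nat_of_nonneg hnn]
    refine hlogP.congr (fun N => ?_)
    refine Finset.sum_congr rfl (fun j _ => ?_)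
    rw [div_pow z]
  have hk2 : HasSum (fun k : ℕ => (1 / 2) * (-Real.log (1 - (z / ((k : ℝ) + 1)) ^ 2)))
      ((1 / 2) * (-Real.log (Real.sin (π * z) / (π * z)))) := hk.mul_left _
  -- summability of the double sum (swapped order)
  set G : ℕ × ℕ → ℝ := fun p => F (p.2, p.1) with hG
  have hGsum : Summable G := by
    rw [summable_prod_of_nonneg (fun p => hFnonneg _)]
    refine ⟨fun k => (hn1 k).summable, ?_⟩
    refine hk2.summable.congr (fun k => ?_)
    exact ((hn1 k).tsum_eq).symm
  have hFsum : Summable F := by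
    have : F ∘ ⇑(Equiv.prodComm ℕ ℕ) = G := rfl
    exact ((Equiv.prodComm ℕ ℕ).summable_iff).1 (this ▸ hGsum)
  -- the two iterated sums agree with the total
  have hGtot : HasSum (fun k : ℕ => (1 / 2) * (-Real.log (1 - (z / ((k : ℝ) + 1)) ^ 2)))
      (∑' p, G p) :=
    hGsum.hasSum.prod_fiberwise (fun k => hn1 k)
  have hGF : ∑' p, G p = ∑' p, F p := by
    rw [← (Equiv.prodComm ℕ ℕ).tsum_eq F]; rfl
  have hval : ∑' p, F p = (1 / 2) * (-Real.log (Real.sin (π * z) / (π * z))) := by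
    rw [← hGF]; exact hGtot.unique hk2
  -- per-n sum over k equals the stated coefficient
  have hζ : ∀ n : ℕ, Summable (fun k : ℕ => 1 / ((k : ℝ) + 1) ^ (2 * (n + 1))) := by
    intro n
    have h0 : Summable (fun m : ℕ => 1 / (m : ℝ) ^ (2 * (n + 1))) :=
      Real.summable_one_div_nat_pow.2 (by omega)
    have := (summable_nat_add_iff 1).2 h0
    refine this.congr (fun k => ?_)
    push_cast; ring_nf
  have ha : ∀ n : ℕ, HasSum (fun k : ℕ => F (n, k))
      ((∑' k : ℕ, 1 / ((k : ℝ) + 1) ^ (2 * (n + 1))) /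
        ((2 * ((n : ℝ) + 1)) * (2 * Real.pi) ^ (2 * (n + 1))) * (x ^ (2 * (n + 1)))⁻¹) := by
    intro n
    set c : ℝ := (1 / 2) * z ^ (2 * (n + 1)) / ((n : ℝ) + 1) with hc
    have h1 : HasSum (fun k : ℕ => c * (1 / ((k : ℝ) + 1) ^ (2 * (n + 1))))
        (c * ∑' k : ℕ, 1 / ((k : ℝ) + 1) ^ (2 * (n + 1))) := (hζ n).hasSum.mul_left c
    have h2 : (fun k : ℕ => c * (1 / ((k : ℝ) + 1) ^ (2 * (n + 1)))) = fun k => F (n, k) := by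
      funext k
      rw [hF, hc]
      simp only
      rw [← pow_mul, div_pow z]
      have hk0 : ((k : ℝ) + 1) ^ (2 * (n + 1)) ≠ 0 := by positivity
      have hn0 : ((n : ℝ) + 1) ≠ 0 := by positivity
      field_simp
    have h3 : c * (∑' k : ℕ, 1 / ((k : ℝ) + 1) ^ (2 * (n + 1))) =
        (∑' k : ℕ, 1 / ((k : ℝ) + 1) ^ (2 * (n + 1))) /
          ((2 * ((n : ℝ) + 1)) * (2 * Real.pi) ^ (2 * (n + 1))) * (x ^ (2 * (n + 1)))⁻¹ := by
      have hzm : z ^ (2 * (n + 1)) = ((2 * π * x) ^ (2 * (n + 1)))⁻¹ := by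
        refine eq_inv_of_mul_eq_one_left ?_
        rw [← mul_pow, hzprod, one_pow]
      rw [hc, hzm, mul_pow]
      exact aux_coeff _ _ _ _ (by positivity) (by positivity) (by positivity)
    rw [← h3, ← h2]
    exact h1
  have hFtot : HasSum
      (fun n : ℕ =>
        (∑' k : ℕ, 1 / ((k : ℝ) + 1) ^ (2 * (n + 1))) /
          ((2 * ((n : ℝ) + 1)) * (2 * Real.pi) ^ (2 * (n + 1))) * (x ^ (2 * (n + 1)))⁻¹)
      (∑' p, F p) :=
    hFsum.hasSum.prod_fiberwise (fun n => ha n)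
  rw [hval] at hFtot
  convert hFtot using 2
  rw [← hpz, ← Real.log_inv, inv_div]
end
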